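/- Let c be an immersed closed curve and a : ℝ → ℝ a smooth 2π-periodic function. Then Ω^{1+κ²}(a·D_s c, k) = 0 for every direction k; i.e. the vertical tangent vectors a·D_s c lie in the kernel of the curvature-weighted presymplectic form at c. -/

import Mathlib

noncomputable section

open Real

/-- Points of `ℝ³`. -/
abbrev V3 := Fin 3 → ℝ

/-- Euclidean inner product on `ℝ³`. -/
def dot3 (u v : V3) : ℝ := u 0 * v 0 + u 1 * v 1 + u 2 * v 2

/-- Cross product on `ℝ³`. -/
def cross3 (u v : V3) : V3 :=
  ![u 1 * v 2 - u 2 * v 1, u 2 * v 0 - u 0 * v 2, u 0 * v 1 - u 1 * v 0]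

/-- Euclidean norm on `ℝ³`. -/
def norm3 (u : V3) : ℝ := Real.sqrt (dot3 u u)

/-- A closed curve: a smooth `2π`-periodic map `ℝ → ℝ³`. -/
def IsClosedCurve (c : ℝ → V3) : Prop :=
  ContDiff ℝ (⊤ : ℕ∞) c ∧ ∀ θ, c (θ + 2 * π) = c θ

/-- An immersed closed curve: `c'(θ) ≠ 0` for all `θ`. -/
def IsImmersed (c : ℝ → V3) : Prop :=
  IsClosedCurve c ∧ ∀ θ, deriv c θ ≠ 0

/-- A direction (tangent vector): a smooth `2π`-periodic map `ℝ → ℝ³`. -/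
def IsDirection (h : ℝ → V3) : Prop :=
  ContDiff ℝ (⊤ : ℕ∞) h ∧ ∀ θ, h (θ + 2 * π) = h θ

/-- Arc-length derivative along `c`: `D_s h = h'/|c'|`. -/
def Ds (c h : ℝ → V3) : ℝ → V3 := fun θ => (norm3 (deriv c θ))⁻¹ • deriv h θ

/-- The unit tangent `T = D_s c = c'/|c'|`. -/
def unitT (c : ℝ → V3) : ℝ → V3 := Ds c c

/-- `D_s² c = D_s (D_s c)`. -/
def Ds2c (c : ℝ → V3) : ℝ → V3 := Ds c (Ds c c)

/-- Arc-length integral `∫ f ds = ∫₀^{2π} f(θ) |c'(θ)| dθ`. -/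
def arcInt (c : ℝ → V3) (f : ℝ → ℝ) : ℝ :=
  ∫ θ in (0:ℝ)..(2 * π), f θ * norm3 (deriv c θ)

/-- `L²(ds)` pairing `⟨f,g⟩_{L²} = ∫ ⟨f,g⟩ ds`. -/
def L2 (c f g : ℝ → V3) : ℝ := arcInt c (fun θ => dot3 (f θ) (g θ))

/-- Length `ℓ_c = ∫₀^{2π} |c'(θ)| dθ`. -/
def curveLen (c : ℝ → V3) : ℝ := ∫ θ in (0:ℝ)..(2 * π), norm3 (deriv c θ)

/-- The Liouville one-form for `L = id`: `Θ(c,h) = ∫₀^{2π} ⟨c × c', h⟩ dθ`. -/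
def Theta (c h : ℝ → V3) : ℝ :=
  ∫ θ in (0:ℝ)..(2 * π), dot3 (cross3 (c θ) (deriv c θ)) (h θ)

/-- The squared curvature `κ² = |D_s² c|²`. -/
def kappaSq (c : ℝ → V3) (θ : ℝ) : ℝ := dot3 (Ds2c c θ) (Ds2c c θ)

/-- The curvature-weighted Liouville form `Θ^{1+κ²}(c,h) = ∫ (1+κ²)⟨c × D_s c, h⟩ ds`. -/
def ThetaK (c h : ℝ → V3) : ℝ :=
  arcInt c (fun θ => (1 + kappaSq c θ) * dot3 (cross3 (c θ) (unitT c θ)) (h θ))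

/-- Arc-length derivative of a scalar function along `c`. -/
def DsScalar (c : ℝ → V3) (f : ℝ → ℝ) : ℝ → ℝ := fun θ => (norm3 (deriv c θ))⁻¹ * deriv f θ

/-- The curvature-weighted presymplectic form at `c`. -/
def OmegaK (c h k : ℝ → V3) : ℝ :=
  arcInt c (fun θ =>
    3 * (1 + kappaSq c θ) * dot3 (unitT c θ) (cross3 (h θ) (k θ))
    + DsScalar c (kappaSq c) θ * dot3 (c θ) (cross3 (h θ) (k θ))
    + (4 * kappaSq c θ * dot3 (Ds c h θ) (unitT c θ)
        - 2 * dot3 (Ds c (Ds c h) θ) (Ds2c c θ)) * dot3 (cross3 (c θ) (unitT c θ)) (k θ)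
    - (4 * kappaSq c θ * dot3 (Ds c k θ) (unitT c θ)
        - 2 * dot3 (Ds c (Ds c k) θ) (Ds2c c θ)) * dot3 (cross3 (c θ) (unitT c θ)) (h θ))

lemma dot3_smul_smul (r s : ℝ) (u v : V3) : dot3 (r • u) (s • v) = r * s * dot3 u v := by
  simp [dot3]; ring

lemma dot3_add_left (u v w : V3) : dot3 (u + v) w = dot3 u w + dot3 v w := by
  simp [dot3]; ring

lemma dot3_smul_left (r : ℝ) (u v : V3) : dot3 (r • u) v = r * dot3 u v := by
  simp [dot3]; ring

lemma dot3_comm (u v : V3) : dot3 u v = dot3 v u := by simp [dot3]; ring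

lemma dot3_cross_self (u v : V3) (a : ℝ) : dot3 u (cross3 (a • u) v) = 0 := by
  simp [dot3, cross3]; ring

lemma dot3_cross_right_self (u v : V3) (a : ℝ) : dot3 (cross3 u v) (a • v) = 0 := by
  simp [dot3, cross3]; ring

lemma triple_prod (u v w : V3) : dot3 (cross3 u v) w = dot3 u (cross3 v w) := by
  simp [dot3, cross3]; ring

lemma dot3_cross_smul (u v w : V3) (a : ℝ) : dot3 u (cross3 (a • v) w) = a * dot3 u (cross3 v w) := by
  simp [dot3, cross3]; ring

lemma dot3_pos (u : V3) (hu : u ≠ 0) : 0 < dot3 u u := by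
  rcases Function.ne_iff.mp hu with ⟨i, hi⟩
  have h0 := sq_nonneg (u 0); have h1 := sq_nonneg (u 1); have h2 := sq_nonneg (u 2)
  simp only [Pi.zero_apply] at hi
  fin_cases i
  · have := mul_self_pos.mpr (show u 0 ≠ 0 from hi); simp [dot3]; nlinarith
  · have := mul_self_pos.mpr (show u 1 ≠ 0 from hi); simp [dot3]; nlinarith
  · have := mul_self_pos.mpr (show u 2 ≠ 0 from hi); simp [dot3]; nlinarith

lemma norm3_pos (u : V3) (hu : u ≠ 0) : 0 < norm3 u := Real.sqrt_pos.mpr (dot3_pos u hu)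

lemma dot3_nonneg (u : V3) : 0 ≤ dot3 u u := by simp [dot3]; nlinarith [sq_nonneg (u 0), sq_nonneg (u 1), sq_nonneg (u 2)]

lemma norm3_mul_self (u : V3) : norm3 u * norm3 u = dot3 u u :=
  Real.mul_self_sqrt (dot3_nonneg u)

lemma HasDerivAt.app3 {f : ℝ → V3} {f' : V3} {θ : ℝ} (h : HasDerivAt f f' θ) (i : Fin 3) :
    HasDerivAt (fun t => (f t i : ℝ)) (f' i : ℝ) θ := by
  have := ((ContinuousLinearMap.proj (R := ℝ) (φ := fun _ : Fin 3 => ℝ) i).hasFDerivAt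
    (x := f θ)).comp_hasDerivAt θ h
  exact this

lemma hasDerivAt_dot3 {f g : ℝ → V3} {f' g' : V3} {θ : ℝ}
    (hf : HasDerivAt f f' θ) (hg : HasDerivAt g g' θ) :
    HasDerivAt (fun t => dot3 (f t) (g t)) (dot3 f' (g θ) + dot3 (f θ) g') θ := by
  simp only [dot3]
  have H := (((hf.app3 0).mul (hg.app3 0)).add ((hf.app3 1).mul (hg.app3 1))).add
    ((hf.app3 2).mul (hg.app3 2))
  convert H using 1
  · rfl
  · rfl
  · rfl
  ring

lemma contDiff_app3 {n : WithTop ℕ∞} {f : ℝ → V3} (hf : ContDiff ℝ n f) (i : Fin 3) :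
    ContDiff ℝ n (fun t => f t i) :=
  (ContinuousLinearMap.proj (R := ℝ) (φ := fun _ : Fin 3 => ℝ) i).contDiff.comp hf

lemma contDiff_dot3 {n : WithTop ℕ∞} {f g : ℝ → V3} (hf : ContDiff ℝ n f) (hg : ContDiff ℝ n g) :
    ContDiff ℝ n (fun t => dot3 (f t) (g t)) := by
  simp only [dot3]
  exact (((contDiff_app3 hf 0).mul (contDiff_app3 hg 0)).add
    ((contDiff_app3 hf 1).mul (contDiff_app3 hg 1))).add
    ((contDiff_app3 hf 2).mul (contDiff_app3 hg 2))

lemma dot3_smul_right (r : ℝ) (u v : V3) : dot3 u (r • v) = r * dot3 u v := by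
  simp [dot3]; ring

lemma dot3_add_right (u v w : V3) : dot3 u (v + w) = dot3 u v + dot3 u w := by
  simp [dot3]; ring


/-- the vertical tangent vectors `a·D_s c` lie in the kernel of the
curvature-weighted presymplectic form at `c`. -/
theorem curvature_weighted_vertical_in_kernel (c : ℝ → V3) (a : ℝ → ℝ)
    (hc : IsImmersed c) (ha : ContDiff ℝ (⊤ : ℕ∞) a) (hap : ∀ θ, a (θ + 2 * π) = a θ) :
    ∀ k, IsDirection k → OmegaK c (fun θ => a θ • unitT c θ) k = 0 := by
  obtain ⟨⟨hcs0, _⟩, hne⟩ := hc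
  have hcs : ContDiff ℝ ((⊤ : ℕ∞) : WithTop ℕ∞) c := hcs0.of_le (by simp)
  replace ha : ContDiff ℝ ((⊤ : ℕ∞) : WithTop ℕ∞) a := ha.of_le (by simp)
  have hu : ContDiff ℝ ((⊤ : ℕ∞) : WithTop ℕ∞) (deriv c) := (contDiff_infty_iff_deriv.mp hcs).2
  have hqpos : ∀ t, 0 < dot3 (deriv c t) (deriv c t) := fun t => dot3_pos _ (hne t)
  have hN : ContDiff ℝ ((⊤ : ℕ∞) : WithTop ℕ∞) (fun t => norm3 (deriv c t)) := by
    unfold norm3; exact (contDiff_dot3 hu hu).sqrt (fun t => (hqpos t).ne')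
  have hNpos : ∀ t, 0 < norm3 (deriv c t) := fun t => norm3_pos _ (hne t)
  have hNinv : ContDiff ℝ ((⊤ : ℕ∞) : WithTop ℕ∞) (fun t => (norm3 (deriv c t))⁻¹) := hN.inv (fun t => (hNpos t).ne')
  have hT : ContDiff ℝ ((⊤ : ℕ∞) : WithTop ℕ∞) (unitT c) := hNinv.smul hu
  have hT' : ContDiff ℝ ((⊤ : ℕ∞) : WithTop ℕ∞) (deriv (unitT c)) := (contDiff_infty_iff_deriv.mp hT).2
  have hT'' : ContDiff ℝ ((⊤ : ℕ∞) : WithTop ℕ∞) (deriv (deriv (unitT c))) := (contDiff_infty_iff_deriv.mp hT').2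
  have hDeq : Ds2c c = fun t => (norm3 (deriv c t))⁻¹ • deriv (unitT c) t := rfl
  have hD : ContDiff ℝ ((⊤ : ℕ∞) : WithTop ℕ∞) (Ds2c c) := hNinv.smul hT'
  have ha' : ContDiff ℝ ((⊤ : ℕ∞) : WithTop ℕ∞) (deriv a) := (contDiff_infty_iff_deriv.mp ha).2
  -- pointwise HasDerivAt extractors
  have dAT : ∀ t, HasDerivAt (unitT c) (deriv (unitT c) t) t :=
    fun t => (hT.differentiable (by simp) t).hasDerivAt
  have dAT' : ∀ t, HasDerivAt (deriv (unitT c)) (deriv (deriv (unitT c)) t) t :=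
    fun t => (hT'.differentiable (by simp) t).hasDerivAt
  have dAD : ∀ t, HasDerivAt (Ds2c c) (deriv (Ds2c c) t) t :=
    fun t => (hD.differentiable (by simp) t).hasDerivAt
  have dANinv : ∀ t, HasDerivAt (fun s => (norm3 (deriv c s))⁻¹)
      (deriv (fun s => (norm3 (deriv c s))⁻¹) t) t :=
    fun t => (hNinv.differentiable (by simp) t).hasDerivAt
  have dAa : ∀ t, HasDerivAt a (deriv a t) t := fun t => (ha.differentiable (by simp) t).hasDerivAt
  have dAa' : ∀ t, HasDerivAt (deriv a) (deriv (deriv a) t) t :=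
    fun t => (ha'.differentiable (by simp) t).hasDerivAt
  -- ⟨T,T⟩ = 1
  have hTT : ∀ t, dot3 (unitT c t) (unitT c t) = 1 := by
    intro t
    show dot3 ((norm3 (deriv c t))⁻¹ • deriv c t) ((norm3 (deriv c t))⁻¹ • deriv c t) = 1
    have hn : norm3 (deriv c t) ≠ 0 := (hNpos t).ne'
    rw [dot3_smul_smul, ← norm3_mul_self]
    field_simp
  -- ⟨T, T'⟩ = 0
  have hTT' : ∀ t, dot3 (unitT c t) (deriv (unitT c) t) = 0 := by
    intro t
    have h1 := hasDerivAt_dot3 (dAT t) (dAT t)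
    rw [funext hTT] at h1
    have h0 := h1.unique (hasDerivAt_const t 1)
    rw [dot3_comm (deriv (unitT c) t)] at h0
    linarith
  -- ⟨T, D⟩ = 0
  have hTD : ∀ t, dot3 (unitT c t) (Ds2c c t) = 0 := by
    intro t
    rw [hDeq]
    simp only [dot3_smul_right, hTT' t, mul_zero]
  -- T' = N • D
  have hT'eq : ∀ t, deriv (unitT c) t = norm3 (deriv c t) • Ds2c c t := by
    intro t
    rw [hDeq, smul_smul, mul_inv_cancel₀ (hNpos t).ne', one_smul]
  -- ⟨T', D⟩ = N κ²
  have hT'D : ∀ t, dot3 (deriv (unitT c) t) (Ds2c c t) = norm3 (deriv c t) * kappaSq c t := by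
    intro t
    rw [hT'eq t, dot3_smul_left]; rfl
  -- deriv κ²
  have hdk : ∀ t, deriv (kappaSq c) t = 2 * dot3 (deriv (Ds2c c) t) (Ds2c c t) := by
    intro t
    have h1 : HasDerivAt (kappaSq c)
        (dot3 (deriv (Ds2c c) t) (Ds2c c t) + dot3 (Ds2c c t) (deriv (Ds2c c) t)) t :=
      hasDerivAt_dot3 (dAD t) (dAD t)
    rw [h1.deriv, dot3_comm (Ds2c c t)]; ring
  intro k _
  -- derivative of h = a • T
  have hderh : ∀ t, deriv (fun θ => a θ • unitT c θ) t
      = a t • deriv (unitT c) t + deriv a t • unitT c t :=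
    fun t => ((dAa t).smul (dAT t)).deriv
  have hDsh : ∀ t, Ds c (fun θ => a θ • unitT c θ) t
      = DsScalar c a t • unitT c t + a t • Ds2c c t := by
    intro t
    show (norm3 (deriv c t))⁻¹ • deriv (fun θ => a θ • unitT c θ) t = _
    rw [hderh t]
    show _ = ((norm3 (deriv c t))⁻¹ * deriv a t) • unitT c t
      + a t • ((norm3 (deriv c t))⁻¹ • deriv (unitT c) t)
    module
  have hDshT : ∀ t, dot3 (Ds c (fun θ => a θ • unitT c θ) t) (unitT c t) = DsScalar c a t := by
    intro t
    rw [hDsh t, dot3_add_left, dot3_smul_left, dot3_smul_left, hTT t,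
      dot3_comm (Ds2c c t) (unitT c t), hTD t]
    ring
  have hDsheq : Ds c (fun θ => a θ • unitT c θ)
      = fun t => (norm3 (deriv c t))⁻¹ • (a t • deriv (unitT c) t + deriv a t • unitT c t) := by
    funext t
    show (norm3 (deriv c t))⁻¹ • deriv (fun θ => a θ • unitT c θ) t = _
    rw [hderh t]
  have hDs2hD : ∀ t, dot3 (Ds c (Ds c (fun θ => a θ • unitT c θ)) t) (Ds2c c t)
      = 2 * DsScalar c a t * kappaSq c t + a t * DsScalar c (kappaSq c) t / 2 := by
    intro t
    have hb : HasDerivAt (fun s => a s • deriv (unitT c) s + deriv a s • unitT c s)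
        ((a t • deriv (deriv (unitT c)) t + deriv a t • deriv (unitT c) t)
         + (deriv a t • deriv (unitT c) t + deriv (deriv a) t • unitT c t)) t :=
      ((dAa t).smul (dAT' t)).add ((dAa' t).smul (dAT t))
    have hg : HasDerivAt (Ds c (fun θ => a θ • unitT c θ))
        ((norm3 (deriv c t))⁻¹ • ((a t • deriv (deriv (unitT c)) t + deriv a t • deriv (unitT c) t)
          + (deriv a t • deriv (unitT c) t + deriv (deriv a) t • unitT c t))
         + (deriv (fun s => (norm3 (deriv c s))⁻¹) t)
            • (a t • deriv (unitT c) t + deriv a t • unitT c t)) t := by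
      rw [hDsheq]
      exact (dANinv t).smul hb
    have hderD : deriv (Ds2c c) t = (norm3 (deriv c t))⁻¹ • deriv (deriv (unitT c)) t
        + (deriv (fun s => (norm3 (deriv c s))⁻¹) t) • deriv (unitT c) t := by
      rw [hDeq]
      exact ((dANinv t).smul (dAT' t)).deriv
    have hval : Ds c (Ds c (fun θ => a θ • unitT c θ)) t
        = (norm3 (deriv c t))⁻¹ • ((norm3 (deriv c t))⁻¹
            • ((a t • deriv (deriv (unitT c)) t + deriv a t • deriv (unitT c) t)
              + (deriv a t • deriv (unitT c) t + deriv (deriv a) t • unitT c t))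
          + (deriv (fun s => (norm3 (deriv c s))⁻¹) t)
            • (a t • deriv (unitT c) t + deriv a t • unitT c t)) := by
      show (norm3 (deriv c t))⁻¹ • deriv (Ds c (fun θ => a θ • unitT c θ)) t = _
      rw [hg.deriv]
    have hX : deriv (kappaSq c) t
        = 2 * ((norm3 (deriv c t))⁻¹ * dot3 (deriv (deriv (unitT c)) t) (Ds2c c t)
          + deriv (fun s => (norm3 (deriv c s))⁻¹) t * (norm3 (deriv c t) * kappaSq c t)) := by
      rw [hdk t, hderD, dot3_add_left, dot3_smul_left, dot3_smul_left, hT'D t]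
    have hDsk : DsScalar c (kappaSq c) t = (norm3 (deriv c t))⁻¹ * deriv (kappaSq c) t := rfl
    have hDsa : DsScalar c a t = (norm3 (deriv c t))⁻¹ * deriv a t := rfl
    rw [hval]
    simp only [dot3_add_left, dot3_smul_left]
    rw [hT'D t, hTD t, hDsk, hDsa]
    have hn0 : norm3 (deriv c t) ≠ 0 := (hNpos t).ne'
    set n := norm3 (deriv c t) with hnn
    set b := deriv (fun s => (norm3 (deriv c s))⁻¹) t with hbb
    set X := dot3 (deriv (deriv (unitT c)) t) (Ds2c c t) with hXX
    set K := kappaSq c t with hKK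
    have h1 : n⁻¹ * X = deriv (kappaSq c) t / 2 - b * (n * K) := by
      rw [hX]; ring
    have hX2 : X = n * deriv (kappaSq c) t / 2 - b * n ^ 2 * K := by
      have h2 : X = n * (n⁻¹ * X) := by field_simp
      rw [h1] at h2
      rw [h2]; ring
    rw [hX2]
    field_simp
    ring
  -- the integrand vanishes pointwise
  have key : ∀ t, (3 * (1 + kappaSq c t) * dot3 (unitT c t) (cross3 (a t • unitT c t) (k t))
      + DsScalar c (kappaSq c) t * dot3 (c t) (cross3 (a t • unitT c t) (k t))
      + (4 * kappaSq c t * dot3 (Ds c (fun θ => a θ • unitT c θ) t) (unitT c t)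
          - 2 * dot3 (Ds c (Ds c (fun θ => a θ • unitT c θ)) t) (Ds2c c t))
        * dot3 (cross3 (c t) (unitT c t)) (k t)
      - (4 * kappaSq c t * dot3 (Ds c k t) (unitT c t)
          - 2 * dot3 (Ds c (Ds c k) t) (Ds2c c t))
        * dot3 (cross3 (c t) (unitT c t)) (a t • unitT c t))
      * norm3 (deriv c t) = 0 := by
    intro t
    rw [hDshT t, hDs2hD t, dot3_cross_self, dot3_cross_right_self, dot3_cross_smul,
      triple_prod]
    ring
  unfold OmegaK arcInt
  rw [intervalIntegral.integral_congr (g := fun _ => (0:ℝ)) (fun t _ => key t)]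
  simp
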